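/- Eulerian-cut equivalence is an equivalence relation on the set of all orientations of G. -/

import Mathlib

/-!  Multigraphs with labelled edges: an edge `e` has endpoints `fst e`, `snd e`.
An orientation is `ε : E → Bool`, where `ε e = true` means `e` is directed
from `fst e` (tail) to `snd e` (head), and `false` means the reverse. -/

structure LabelledGraph (V E : Type) where
  fst : E → V
  snd : E → V

namespace LabelledGraph

variable {V E : Type}

/-- Head (target) of edge `e` under orientation `ε`. -/
def head (G : LabelledGraph V E) (ε : E → Bool) (e : E) : V := cond (ε e) (G.snd e) (G.fst e)

/-- Tail (source) of edge `e` under orientation `ε`. -/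
def tail (G : LabelledGraph V E) (ε : E → Bool) (e : E) : V := cond (ε e) (G.fst e) (G.snd e)

/-- Directed reachability under `ε`. -/
def Reaches (G : LabelledGraph V E) (ε : E → Bool) (u v : V) : Prop :=
  Relation.ReflTransGen (fun a b => ∃ e, G.tail ε e = a ∧ G.head ε e = b) u v

/-- Directed reachability avoiding the edge `e₀` (i.e. in `G - e₀`). -/
def ReachesAvoiding (G : LabelledGraph V E) (ε : E → Bool) (e₀ : E) (u v : V) : Prop :=
  Relation.ReflTransGen (fun a b => ∃ e, e ≠ e₀ ∧ G.tail ε e = a ∧ G.head ε e = b) u v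

/-- `ε` has a directed cut: a set `S` of vertices with at least one edge leaving `S`
and no edge entering `S`. -/
def HasDirCut (G : LabelledGraph V E) (ε : E → Bool) : Prop :=
  ∃ S : Set V, (∃ e, G.tail ε e ∈ S ∧ G.head ε e ∉ S) ∧
    ∀ e, G.head ε e ∈ S → G.tail ε e ∈ S

/-- A totally cyclic orientation: one without directed cuts. -/
def TotallyCyclic (G : LabelledGraph V E) (ε : E → Bool) : Prop := ¬ G.HasDirCut ε

/-- An acyclic orientation: no directed cycle, i.e. no edge whose head reaches its tail. -/
def Acyclic (G : LabelledGraph V E) (ε : E → Bool) : Prop :=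
  ∀ e, ¬ G.Reaches ε (G.head ε e) (G.tail ε e)

/-- The set of edges `D` induces a directed Eulerian subgraph w.r.t. `ε`:
in-degree equals out-degree at each vertex. -/
def IsEulerianSet (G : LabelledGraph V E) (ε : E → Bool) (D : Set E) : Prop :=
  ∀ v, Nat.card {e : E // e ∈ D ∧ G.head ε e = v} =
       Nat.card {e : E // e ∈ D ∧ G.tail ε e = v}

/-- The set of edges on which two orientations differ. -/
def diffSet (ε₁ ε₂ : E → Bool) : Set E := {e | ε₁ e ≠ ε₂ e}

/-- Eulerian equivalence of orientations. -/
def EulerianEquiv (G : LabelledGraph V E) (ε₁ ε₂ : E → Bool) : Prop :=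
  G.IsEulerianSet ε₁ (diffSet ε₁ ε₂)

/-- The edges crossing between `S` and its complement. -/
def cutEdges (G : LabelledGraph V E) (S : Set V) : Set E :=
  {e | (G.fst e ∈ S ∧ G.snd e ∉ S) ∨ (G.fst e ∉ S ∧ G.snd e ∈ S)}

/-- A bond: a minimal nonempty edge cut. -/
def IsBond (G : LabelledGraph V E) (D : Set E) : Prop :=
  (∃ S, D = G.cutEdges S) ∧ D.Nonempty ∧
    ∀ D', (∃ S, D' = G.cutEdges S) → D'.Nonempty → D' ⊆ D → D' = D

/-- A directed bond w.r.t. `ε`: a bond all of whose edges go from `S` to its complement. -/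
def IsDirectedBond (G : LabelledGraph V E) (ε : E → Bool) (D : Set E) : Prop :=
  G.IsBond D ∧ ∃ S, D = G.cutEdges S ∧ ∀ e ∈ D, G.tail ε e ∈ S

/-- A directed cut: a disjoint union of directed bonds. -/
def IsDirectedCut (G : LabelledGraph V E) (ε : E → Bool) (D : Set E) : Prop :=
  ∃ (n : ℕ) (B : Fin n → Set E), (∀ i, G.IsDirectedBond ε (B i)) ∧
    (Pairwise fun i j => Disjoint (B i) (B j)) ∧ D = ⋃ i, B i

/-- Cut equivalence of orientations. -/
def CutEquiv (G : LabelledGraph V E) (ε₁ ε₂ : E → Bool) : Prop :=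
  G.IsDirectedCut ε₁ (diffSet ε₁ ε₂) ∨ G.IsDirectedCut ε₂ (diffSet ε₁ ε₂)

/-- Eulerian-cut equivalence of orientations: the differing edges split into an
edge-disjoint union of a directed Eulerian subgraph and a directed cut. -/
def EulCutEquiv (G : LabelledGraph V E) (ε₁ ε₂ : E → Bool) : Prop :=
  (∃ D₁ D₂ : Set E, Disjoint D₁ D₂ ∧ diffSet ε₁ ε₂ = D₁ ∪ D₂ ∧
      G.IsEulerianSet ε₁ D₁ ∧ G.IsDirectedCut ε₁ D₂) ∨
  (∃ D₁ D₂ : Set E, Disjoint D₁ D₂ ∧ diffSet ε₁ ε₂ = D₁ ∪ D₂ ∧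
      G.IsEulerianSet ε₂ D₁ ∧ G.IsDirectedCut ε₂ D₂)

/-- Undirected connectivity via the edges of `A` (spanning subgraph `(V, A)`). -/
def connRel (G : LabelledGraph V E) (A : Set E) : V → V → Prop :=
  Relation.EqvGen (fun u v => ∃ e ∈ A, (G.fst e = u ∧ G.snd e = v) ∨ (G.fst e = v ∧ G.snd e = u))

/-- Number of connected components of the spanning subgraph `(V, A)`. -/
noncomputable def ncomp (G : LabelledGraph V E) (A : Set E) : ℕ :=
  Nat.card (Quot (G.connRel A))

def Connected (G : LabelledGraph V E) : Prop := ∀ u v : V, G.connRel Set.univ u v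

/-- Rank of an edge set: `|V| - c(A)`. -/
noncomputable def rank (G : LabelledGraph V E) [Fintype V] (A : Set E) : ℕ :=
  Fintype.card V - G.ncomp A

/-- The Tutte polynomial (Whitney rank expansion), evaluated at `(x, y)`. -/
noncomputable def tutte (G : LabelledGraph V E) [Fintype V] [Fintype E] (x y : ℤ) : ℤ :=
  ∑ A : Finset E, (x - 1) ^ (G.rank (Set.univ : Set E) - G.rank (A : Set E)) *
    (y - 1) ^ (A.card - G.rank (A : Set E))

/-- The Eulerian equivalence class (within totally cyclic orientations) of `ε`. -/
def eulClass (G : LabelledGraph V E) (ε : E → Bool) : Set (E → Bool) :=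
  {ε' | G.TotallyCyclic ε' ∧ G.EulerianEquiv ε ε'}

/-- The number of Eulerian equivalence classes of totally cyclic orientations. -/
noncomputable def numEulClasses (G : LabelledGraph V E) : ℕ :=
  Nat.card {C : Set (E → Bool) // ∃ ε, G.TotallyCyclic ε ∧ C = G.eulClass ε}

/-- The cut equivalence class (within acyclic orientations) of `ε`. -/
def cutClass (G : LabelledGraph V E) (ε : E → Bool) : Set (E → Bool) :=
  {ε' | G.Acyclic ε' ∧ G.CutEquiv ε ε'}

/-- The number of cut equivalence classes of acyclic orientations. -/
noncomputable def numCutClasses (G : LabelledGraph V E) : ℕ :=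
  Nat.card {C : Set (E → Bool) // ∃ ε, G.Acyclic ε ∧ C = G.cutClass ε}

/-- Deletion of the edge `e`. -/
def deleteEdge (G : LabelledGraph V E) (e : E) : LabelledGraph V {f : E // f ≠ e} :=
  ⟨fun f => G.fst f.val, fun f => G.snd f.val⟩

/-- Contraction of the edge `e`: identify its two endpoints and remove `e`. -/
def contractEdge (G : LabelledGraph V E) (e : E) :
    LabelledGraph (Quot fun a b => a = G.fst e ∧ b = G.snd e) {f : E // f ≠ e} :=
  ⟨fun f => Quot.mk _ (G.fst f.val), fun f => Quot.mk _ (G.snd f.val)⟩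

/-- `e` is a bridge: its endpoints are disconnected in `G - e`. -/
def IsBridge (G : LabelledGraph V E) (e : E) : Prop :=
  ¬ G.connRel {f | f ≠ e} (G.fst e) (G.snd e)

def IsLoop (G : LabelledGraph V E) (e : E) : Prop := G.fst e = G.snd e

/-- A directed edge `e` is cycle flippable w.r.t. `ε` if there are directed paths
both from its tail to its head and from its head to its tail in `G - e`. -/
def CycleFlippable (G : LabelledGraph V E) (ε : E → Bool) (e : E) : Prop :=
  G.ReachesAvoiding ε e (G.tail ε e) (G.head ε e) ∧
  G.ReachesAvoiding ε e (G.head ε e) (G.tail ε e)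

/-- A directed cycle: a nonempty list of distinct edges, consecutively joined
head-to-tail, closing up. -/
def IsDirectedCycle (G : LabelledGraph V E) (ε : E → Bool) (C : List E) : Prop :=
  C ≠ [] ∧ C.Nodup ∧ C.Chain' (fun a b => G.head ε a = G.tail ε b) ∧
    ∀ h : C ≠ [], G.head ε (C.getLast h) = G.tail ε (C.head h)

/-- `ε` is reduced w.r.t. the normal orientation `εN` and the edge order: for each
edge `e`, either `ε` agrees with `εN` on `e`, or no directed cycle through `e`
has all its other edges smaller than `e`. -/
def Reduced (G : LabelledGraph V E) [LinearOrder E] (εN ε : E → Bool) : Prop :=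
  ∀ e, ε e = εN e ∨
    ¬ ∃ C : List E, G.IsDirectedCycle ε C ∧ e ∈ C ∧ ∀ f ∈ C, f ≠ e → f < e

/-- `T` is (the edge set of) a spanning tree of `G`. -/
def IsSpanningTree (G : LabelledGraph V E) [Fintype V] (T : Finset E) : Prop :=
  (∀ u v : V, G.connRel (↑T) u v) ∧ T.card + 1 = Fintype.card V

/-- `e ∈ T` is internally active: it is the smallest edge of the fundamental cut it defines. -/
def InternallyActive (G : LabelledGraph V E) [Fintype V] [LinearOrder E] [DecidableEq E]
    (T : Finset E) (e : E) : Prop :=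
  e ∈ T ∧ ∀ f, G.IsSpanningTree (insert f (T.erase e)) → e ≤ f

/-- `e ∉ T` is externally active: it is the smallest edge of the fundamental cycle of `T + e`. -/
def ExternallyActive (G : LabelledGraph V E) [Fintype V] [LinearOrder E] [DecidableEq E]
    (T : Finset E) (e : E) : Prop :=
  e ∉ T ∧ ∀ f ∈ T, G.IsSpanningTree (insert e (T.erase f)) → e ≤ f

/-- `v` is a source of `(G, ε)`. -/
def IsSource (G : LabelledGraph V E) (ε : E → Bool) (v : V) : Prop :=
  ∀ e, G.head ε e ≠ v

end LabelledGraph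


namespace LabelledGraph

open Classical Finset

variable {V E : Type}

/-- Sign of an edge under an orientation: `1` if `ε e = true`, `-1` otherwise. -/
noncomputable def sg (ε : E → Bool) (e : E) : ℤ := if ε e then 1 else -1

/-- Integer indicator of a set of edges. -/
noncomputable def cind (D : Set E) (e : E) : ℤ := if e ∈ D then 1 else 0

/-- Integer indicator of a set of vertices. -/
noncomputable def chi (S : Set V) (v : V) : ℤ := if v ∈ S then 1 else 0

/-- Coboundary (tension) of a potential. -/
noncomputable def dd (G : LabelledGraph V E) (p : V → ℤ) (e : E) : ℤ := p (G.fst e) - p (G.snd e)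

/-- Indicator of equality of vertices. -/
noncomputable def ee (u v : V) : ℤ := if u = v then 1 else 0

/-- Boundary of an integer edge-vector. -/
noncomputable def bnd (G : LabelledGraph V E) [Fintype E] (x : E → ℤ) (v : V) : ℤ :=
  ∑ e, x e * (ee (G.snd e) v - ee (G.fst e) v)

/-- The signed difference indicator of two orientations. -/
noncomputable def gg (ε₁ ε₂ : E → Bool) (e : E) : ℤ := if ε₁ e = ε₂ e then 0 else sg ε₁ e

lemma sg_flip {ε₁ ε₂ : E → Bool} {e : E} (h : ε₁ e ≠ ε₂ e) : sg ε₂ e = - sg ε₁ e := by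
  cases h1 : ε₁ e <;> cases h2 : ε₂ e <;> simp_all [sg]

lemma gg_add (ε₁ ε₂ ε₃ : E → Bool) (e : E) : gg ε₁ ε₃ e = gg ε₁ ε₂ e + gg ε₂ ε₃ e := by
  cases h1 : ε₁ e <;> cases h2 : ε₂ e <;> cases h3 : ε₃ e <;> simp_all [gg, sg]

lemma bnd_congr (G : LabelledGraph V E) [Fintype E] {x y : E → ℤ} (h : ∀ e, x e = y e) (v : V) :
    G.bnd x v = G.bnd y v := by
  unfold bnd; exact Finset.sum_congr rfl fun e _ => by rw [h e]

/-- "Good": algebraic form of Eulerian-cut equivalence via a potential. -/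
def good (G : LabelledGraph V E) [Fintype E] (ε₁ ε₂ : E → Bool) : Prop :=
  ∃ p : V → ℤ, (∀ e, G.dd p e = 0 ∨ G.dd p e = gg ε₁ ε₂ e) ∧
    (∀ v, G.bnd (fun e => gg ε₁ ε₂ e - G.dd p e) v = 0)

lemma flux (G : LabelledGraph V E) [Fintype E] {x : E → ℤ} (hx : ∀ v, G.bnd x v = 0)
    [Fintype V] (S : Set V) :
    ∑ e, x e * (chi S (G.snd e) - chi S (G.fst e)) = 0 := by
  classical
  have h1 : ∑ v ∈ Finset.univ.filter (· ∈ S), G.bnd x v = 0 :=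
    Finset.sum_eq_zero fun v _ => hx v
  rw [← h1]
  unfold bnd
  rw [Finset.sum_comm]
  refine Finset.sum_congr rfl fun e _ => ?_
  rw [← Finset.mul_sum]
  congr 1
  rw [Finset.sum_sub_distrib]
  congr 1
  · unfold ee chi
    rw [Finset.sum_ite_eq (Finset.univ.filter (· ∈ S)) (G.snd e) (fun _ => (1:ℤ))]
    simp
  · unfold ee chi
    rw [Finset.sum_ite_eq (Finset.univ.filter (· ∈ S)) (G.fst e) (fun _ => (1:ℤ))]
    simp

lemma eulerian_iff (G : LabelledGraph V E) [Fintype E] (ε : E → Bool) (D : Set E) :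
    G.IsEulerianSet ε D ↔ ∀ v, G.bnd (fun e => sg ε e * cind D e) v = 0 := by
  classical
  have key : ∀ v, G.bnd (fun e => sg ε e * cind D e) v =
      ((Finset.univ.filter fun e => e ∈ D ∧ G.head ε e = v).card : ℤ) -
      ((Finset.univ.filter fun e => e ∈ D ∧ G.tail ε e = v).card : ℤ) := by
    intro v
    unfold bnd
    rw [show ((Finset.univ.filter fun e => e ∈ D ∧ G.head ε e = v).card : ℤ) =
        ∑ e, (if e ∈ D ∧ G.head ε e = v then (1:ℤ) else 0) by
          rw [Finset.sum_boole]]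
    rw [show ((Finset.univ.filter fun e => e ∈ D ∧ G.tail ε e = v).card : ℤ) =
        ∑ e, (if e ∈ D ∧ G.tail ε e = v then (1:ℤ) else 0) by
          rw [Finset.sum_boole]]
    rw [← Finset.sum_sub_distrib]
    refine Finset.sum_congr rfl fun e _ => ?_
    unfold sg cind ee head tail
    by_cases hD : e ∈ D <;> cases hε : ε e <;>
      by_cases h1 : G.snd e = v <;> by_cases h2 : G.fst e = v <;>
      simp [hD, hε, h1, h2]
  have card_eq : ∀ v, Nat.card {e : E // e ∈ D ∧ G.head ε e = v} =
      (Finset.univ.filter fun e => e ∈ D ∧ G.head ε e = v).card ∧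
      Nat.card {e : E // e ∈ D ∧ G.tail ε e = v} =
      (Finset.univ.filter fun e => e ∈ D ∧ G.tail ε e = v).card := by
    intro v
    constructor <;> · rw [Nat.card_eq_fintype_card, Fintype.card_subtype]
  unfold IsEulerianSet
  constructor
  · intro h v
    rw [key v, (card_eq v).1.symm, (card_eq v).2.symm, h v, sub_self]
  · intro h v
    have := h v
    rw [key v] at this
    rw [(card_eq v).1, (card_eq v).2]
    omega

lemma not_cross {S : Set V} {e : E} (G : LabelledGraph V E) (h : e ∉ G.cutEdges S) :
    chi S (G.fst e) = chi S (G.snd e) := by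
  unfold cutEdges at h
  simp only [Set.mem_setOf_eq] at h
  push_neg at h
  unfold chi
  by_cases h1 : G.fst e ∈ S <;> by_cases h2 : G.snd e ∈ S <;> simp [h1, h2] <;> tauto

lemma cross_term {S : Set V} {e : E} (G : LabelledGraph V E) (ε : E → Bool)
    (h : e ∈ G.cutEdges S) (ht : G.tail ε e ∈ S) :
    chi S (G.fst e) - chi S (G.snd e) = sg ε e := by
  unfold cutEdges at h
  simp only [Set.mem_setOf_eq] at h
  unfold tail at ht
  cases hε : ε e <;> rw [hε] at ht <;> simp only [cond] at ht <;>
    unfold chi sg <;> rcases h with ⟨h1, h2⟩ | ⟨h1, h2⟩ <;> simp [hε, h1, h2] <;> tauto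

lemma cut_to_potential (G : LabelledGraph V E) [Fintype E] (ε : E → Bool) (D : Set E)
    (h : G.IsDirectedCut ε D) : ∃ p : V → ℤ, ∀ e, G.dd p e = sg ε e * cind D e := by
  classical
  obtain ⟨n, B, hb, hdis, hD⟩ := h
  choose S hSeq hdir using fun i => (hb i).2
  refine ⟨fun v => ∑ i : Fin n, chi (S i) v, fun e => ?_⟩
  have hsum : G.dd (fun v => ∑ i : Fin n, chi (S i) v) e
      = ∑ i : Fin n, (chi (S i) (G.fst e) - chi (S i) (G.snd e)) := by
    unfold dd
    rw [Finset.sum_sub_distrib]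
  rw [hsum]
  by_cases he : e ∈ D
  · rw [hD] at he
    obtain ⟨j, hj⟩ := Set.mem_iUnion.mp he
    rw [Finset.sum_eq_single j]
    · have hje : e ∈ G.cutEdges (S j) := by rw [← hSeq j]; exact hj
      rw [cross_term G ε hje (hdir j e hj)]
      have : cind D e = 1 := by unfold cind; rw [hD]; simp [Set.mem_iUnion]; exact ⟨j, hj⟩
      rw [this, mul_one]
    · intro i _ hij
      have : e ∉ G.cutEdges (S i) := by
        rw [← hSeq i]
        intro hi
        exact Set.disjoint_left.mp (hdis (Ne.symm hij)) hj hi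
      rw [not_cross G this, sub_self]
    · intro h'; exact absurd (Finset.mem_univ j) h'
  · have h0 : cind D e = 0 := by unfold cind; simp [he]
    rw [h0, mul_zero]
    refine Finset.sum_eq_zero fun i _ => ?_
    have : e ∉ G.cutEdges (S i) := by
      rw [← hSeq i]
      intro hi
      exact he (hD ▸ Set.mem_iUnion.mpr ⟨i, hi⟩)
    rw [not_cross G this, sub_self]

lemma cutEdges_compl (G : LabelledGraph V E) (K : Set V) : G.cutEdges Kᶜ = G.cutEdges K := by
  ext e
  unfold cutEdges
  simp only [Set.mem_setOf_eq, Set.mem_compl_iff]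
  tauto

lemma empty_cut (G : LabelledGraph V E) (ε : E → Bool) : G.IsDirectedCut ε (∅ : Set E) := by
  refine ⟨0, Fin.elim0, fun i => i.elim0, fun i => i.elim0, ?_⟩
  simp

lemma potential_to_cut (G : LabelledGraph V E) [Fintype E] (ε : E → Bool) (D : Set E) (p : V → ℤ)
    (h : ∀ e, G.dd p e = sg ε e * cind D e) : G.IsDirectedCut ε D := by
  classical
  -- strong induction on the number of edges of D
  suffices H : ∀ n : ℕ, ∀ D : Set E, ∀ p : V → ℤ, D.ncard ≤ n →
      (∀ e, G.dd p e = sg ε e * cind D e) → G.IsDirectedCut ε D by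
    exact H D.ncard D p le_rfl h
  intro n
  induction n with
  | zero =>
    intro D p hc _
    have : D = ∅ := by
      rw [← Set.ncard_eq_zero (Set.toFinite D)]
      omega
    rw [this]; exact G.empty_cut ε
  | succ n ih =>
    intro D p hc h
    rcases Set.eq_empty_or_nonempty D with hD | ⟨e₀, he₀⟩
    · rw [hD]; exact G.empty_cut ε
    -- basic facts from the potential
    have hin : ∀ e ∈ D, p (G.tail ε e) = p (G.head ε e) + 1 := by
      intro e he
      have hh := h e
      unfold dd sg cind at hh
      rw [if_pos he] at hh
      unfold tail head
      cases hε : ε e <;> simp [hε] at hh ⊢ <;> omega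
    have hout : ∀ e, e ∉ D → p (G.fst e) = p (G.snd e) := by
      intro e he
      have := h e
      unfold cind at this
      rw [if_neg he, mul_zero] at this
      unfold dd at this
      omega
    set t₀ := G.tail ε e₀ with ht₀
    set h₀ := G.head ε e₀ with hh₀
    -- the closure set S
    set Rel : V → V → Prop := fun u v => ∃ e,
        (e ∉ D ∧ ((G.fst e = u ∧ G.snd e = v) ∨ (G.fst e = v ∧ G.snd e = u))) ∨
        (e ∈ D ∧ G.head ε e = u ∧ G.tail ε e = v) with hRel
    set S : Set V := {v | Relation.ReflTransGen Rel t₀ v} with hS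
    have ht₀S : t₀ ∈ S := Relation.ReflTransGen.refl
    have pS : ∀ v ∈ S, p t₀ ≤ p v := by
      intro v hv
      induction hv with
      | refl => exact le_refl _
      | tail _ hstep ih2 =>
        obtain ⟨e, ⟨he, hor⟩ | ⟨he, hh, ht⟩⟩ := hstep
        · have := hout e he
          rcases hor with ⟨h1, h2⟩ | ⟨h1, h2⟩ <;> rw [h1, h2] at this <;> omega
        · have := hin e he
          rw [hh, ht] at this
          omega
    have hh₀S : h₀ ∉ S := by
      intro hmem
      have h1 := pS h₀ hmem
      have h2 := hin e₀ he₀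
      rw [← ht₀, ← hh₀] at h2
      omega
    have cS1 : ∀ e, e ∉ D → (G.fst e ∈ S ↔ G.snd e ∈ S) := by
      intro e he
      constructor <;> intro hm
      · exact Relation.ReflTransGen.tail hm ⟨e, Or.inl ⟨he, Or.inl ⟨rfl, rfl⟩⟩⟩
      · exact Relation.ReflTransGen.tail hm ⟨e, Or.inl ⟨he, Or.inr ⟨rfl, rfl⟩⟩⟩
    have cS2 : ∀ e ∈ D, G.head ε e ∈ S → G.tail ε e ∈ S := by
      intro e he hm
      exact Relation.ReflTransGen.tail hm ⟨e, Or.inr ⟨he, rfl, rfl⟩⟩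
    -- the component K of h₀ outside S
    set RelK : V → V → Prop := fun u v => ∃ e, G.fst e ∉ S ∧ G.snd e ∉ S ∧
        ((G.fst e = u ∧ G.snd e = v) ∨ (G.fst e = v ∧ G.snd e = u)) with hRelK
    set K : Set V := {v | Relation.ReflTransGen RelK h₀ v} with hK
    have hh₀K : h₀ ∈ K := Relation.ReflTransGen.refl
    have KnS : ∀ v ∈ K, v ∉ S := by
      intro v hv
      induction hv with
      | refl => exact hh₀S
      | tail _ hstep _ =>
        obtain ⟨e, h1, h2, hor⟩ := hstep
        rcases hor with ⟨_, he2⟩ | ⟨he1, _⟩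
        · rw [← he2]; exact h2
        · rw [← he1]; exact h1
    set B : Set E := G.cutEdges K with hB
    -- edges of B go between K and S
    have Bside : ∀ e ∈ B, (G.fst e ∈ K ∧ G.snd e ∈ S) ∨ (G.fst e ∈ S ∧ G.snd e ∈ K) := by
      intro e he
      rcases he with ⟨h1, h2⟩ | ⟨h1, h2⟩
      · left
        refine ⟨h1, ?_⟩
        by_contra hns
        exact h2 (Relation.ReflTransGen.tail h1 ⟨e, KnS _ h1, hns, Or.inl ⟨rfl, rfl⟩⟩)
      · right
        refine ⟨?_, h2⟩
        by_contra hns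
        exact h1 (Relation.ReflTransGen.tail h2 ⟨e, hns, KnS _ h2, Or.inr ⟨rfl, rfl⟩⟩)
    have BD : B ⊆ D := by
      intro e he
      by_contra hnD
      rcases Bside e he with ⟨h1, h2⟩ | ⟨h1, h2⟩
      · exact KnS _ h1 ((cS1 e hnD).mpr h2)
      · exact KnS _ h2 ((cS1 e hnD).mp h1)
    have Bdir : ∀ e ∈ B, G.tail ε e ∈ S := by
      intro e he
      have heD := BD he
      rcases Bside e he with ⟨h1, h2⟩ | ⟨h1, h2⟩
      · cases hε : ε e
        · simp only [tail, hε, Bool.cond_false]; exact h2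
        · exfalso
          have hhS : G.head ε e ∈ S := by
            simp only [head, hε, Bool.cond_true]; exact h2
          have htS := cS2 e heD hhS
          simp only [tail, hε, Bool.cond_true] at htS
          exact KnS _ h1 htS
      · cases hε : ε e
        · exfalso
          have hhS : G.head ε e ∈ S := by
            simp only [head, hε, Bool.cond_false]; exact h1
          have htS := cS2 e heD hhS
          simp only [tail, hε, Bool.cond_false] at htS
          exact KnS _ h2 htS
        · simp only [tail, hε, Bool.cond_true]; exact h1
    have he₀B : e₀ ∈ B := by
      have h1 : t₀ ∉ K := fun hk => KnS _ hk ht₀S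
      have h2 := hh₀K
      rw [ht₀] at h1
      rw [hh₀] at h2
      show e₀ ∈ G.cutEdges K
      unfold cutEdges
      simp only [Set.mem_setOf_eq]
      cases hε : ε e₀ <;>
        simp only [head, tail, hε, Bool.cond_false, Bool.cond_true] at h1 h2
      · left; exact ⟨h2, h1⟩
      · right; exact ⟨h1, h2⟩
    -- constancy of cut indicators along S and K
    have constT : ∀ T : Set V, (∀ e, e ∉ B → e ∉ G.cutEdges T) →
        (∀ v ∈ S, (v ∈ T ↔ t₀ ∈ T)) ∧ (∀ v ∈ K, (v ∈ T ↔ h₀ ∈ T)) := by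
      intro T hT
      have hcross : ∀ e, e ∉ G.cutEdges T → (G.fst e ∈ T ↔ G.snd e ∈ T) := by
        intro e he
        unfold cutEdges at he
        simp only [Set.mem_setOf_eq] at he
        push_neg at he
        tauto
      constructor
      · intro v hv
        induction hv with
        | refl => rfl
        | @tail b c _ hstep ih2 =>
          rw [← ih2]
          rename_i hbS
          have hcS : c ∈ S := Relation.ReflTransGen.tail hbS hstep
          obtain ⟨e, ⟨he, hor⟩ | ⟨he, hh, ht⟩⟩ := hstep
          · -- edge between b and c, both in S, so not in B
            have henB : e ∉ B := by
              intro heB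
              rcases Bside e heB with ⟨h1, _⟩ | ⟨_, h2⟩ <;> rcases hor with ⟨q1, q2⟩ | ⟨q1, q2⟩
              · exact KnS _ h1 (q1 ▸ hbS)
              · exact KnS _ h1 (q1 ▸ hcS)
              · exact KnS _ h2 (q2 ▸ hcS)
              · exact KnS _ h2 (q2 ▸ hbS)
            have := hcross e (hT e henB)
            rcases hor with ⟨q1, q2⟩ | ⟨q1, q2⟩
            · rw [← q1, ← q2]; exact this.symm
            · rw [← q1, ← q2]; exact this
          · -- D-edge with head b tail c, both in S
            have henB : e ∉ B := by
              intro heB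
              have h1 : G.head ε e ∈ S := hh ▸ hbS
              have h2 : G.tail ε e ∈ S := ht ▸ hcS
              rcases Bside e heB with ⟨q1, q2⟩ | ⟨q1, q2⟩ <;> cases hε : ε e <;>
                simp only [head, tail, hε, Bool.cond_false, Bool.cond_true] at h1 h2
              · exact KnS _ q1 h1
              · exact KnS _ q1 h2
              · exact KnS _ q2 h2
              · exact KnS _ q2 h1
            have hiff := hcross e (hT e henB)
            have hht : (G.head ε e ∈ T ↔ G.tail ε e ∈ T) := by
              cases hε : ε e
              · simp only [head, tail, hε, Bool.cond_false]; exact hiff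
              · simp only [head, tail, hε, Bool.cond_true]; exact hiff.symm
            rw [hh, ht] at hht
            exact hht.symm
      · intro v hv
        induction hv with
        | refl => rfl
        | @tail b c _ hstep ih2 =>
          rw [← ih2]
          rename_i hbK
          have hcK : c ∈ K := Relation.ReflTransGen.tail hbK hstep
          obtain ⟨e, h1, h2, hor⟩ := hstep
          have henB : e ∉ B := by
            intro heB
            rcases Bside e heB with ⟨_, q2⟩ | ⟨q1, _⟩
            · exact h2 q2
            · exact h1 q1
          have := hcross e (hT e henB)
          rcases hor with ⟨q1, q2⟩ | ⟨q1, q2⟩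
          · rw [← q1, ← q2]; exact this.symm
          · rw [← q1, ← q2]; exact this
    -- B is a directed bond
    have hbond : G.IsDirectedBond ε B := by
      refine ⟨⟨⟨K, rfl⟩, ⟨e₀, he₀B⟩, ?_⟩, ⟨Kᶜ, (G.cutEdges_compl K).symm, ?_⟩⟩
      · rintro D' ⟨T, hT⟩ ⟨f, hf⟩ hsub
        have hT' : ∀ e, e ∉ B → e ∉ G.cutEdges T := by
          intro e he hce
          exact he (hsub (hT ▸ hce))
        obtain ⟨constS, constK⟩ := constT T hT'
        have hfB : f ∈ B := hsub hf
        have hfT : f ∈ G.cutEdges T := hT ▸ hf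
        have hXOR : ¬ (t₀ ∈ T ↔ h₀ ∈ T) := by
          rcases Bside f hfB with ⟨q1, q2⟩ | ⟨q1, q2⟩
          · have a1 := constK _ q1
            have a2 := constS _ q2
            rcases hfT with ⟨r1, r2⟩ | ⟨r1, r2⟩ <;> tauto
          · have a1 := constS _ q1
            have a2 := constK _ q2
            rcases hfT with ⟨r1, r2⟩ | ⟨r1, r2⟩ <;> tauto
        subst hT
        apply Set.Subset.antisymm hsub
        intro g hgB
        have hgT : (G.fst g ∈ T ∧ G.snd g ∉ T) ∨ (G.fst g ∉ T ∧ G.snd g ∈ T) := by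
          rcases Bside g hgB with ⟨q1, q2⟩ | ⟨q1, q2⟩
          · have a1 := constK _ q1
            have a2 := constS _ q2
            tauto
          · have a1 := constS _ q1
            have a2 := constK _ q2
            tauto
        exact hgT
      · intro e he
        exact Set.mem_compl (fun hk => KnS _ hk (Bdir e he))
    -- new potential for D \ B
    set p' : V → ℤ := fun v => if v ∈ K then p v else p v - 1 with hp'
    have h' : ∀ e, G.dd p' e = sg ε e * cind (D \ B) e := by
      intro e
      by_cases hf : G.fst e ∈ K <;> by_cases hs : G.snd e ∈ K
      · -- both in K : not in B
        have henB : e ∉ B := fun he => by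
          rcases Bside e he with ⟨_, q⟩ | ⟨q, _⟩
          · exact KnS _ hs q
          · exact KnS _ hf q
        have : G.dd p' e = G.dd p e := by unfold p'; unfold dd; simp [hf, hs]
        rw [this, h e]
        congr 1
        unfold cind
        by_cases heD : e ∈ D <;> simp [heD, henB]
      · -- fst ∈ K, snd ∉ K : e ∈ B, tail is snd
        have heB : e ∈ B := Or.inl ⟨hf, hs⟩
        have heD : e ∈ D := BD heB
        have htS : G.tail ε e ∈ S := Bdir e heB
        have hεe : ε e = false := by
          cases hε : ε e
          · rfl
          · exfalso
            unfold tail at htS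
            rw [hε] at htS
            simp only [cond] at htS
            exact KnS _ hf htS
        have hval := hin e heD
        unfold tail head at hval
        rw [hεe] at hval
        simp only [cond] at hval
        have : cind (D \ B) e = 0 := by unfold cind; simp [heB]
        rw [this, mul_zero]
        unfold p'; unfold dd
        simp only [hf, hs, if_true, if_false]
        omega
      · -- fst ∉ K, snd ∈ K : e ∈ B, tail is fst
        have heB : e ∈ B := Or.inr ⟨hf, hs⟩
        have heD : e ∈ D := BD heB
        have htS : G.tail ε e ∈ S := Bdir e heB
        have hεe : ε e = true := by
          cases hε : ε e
          · exfalso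
            unfold tail at htS
            rw [hε] at htS
            simp only [cond] at htS
            exact KnS _ hs htS
          · rfl
        have hval := hin e heD
        unfold tail head at hval
        rw [hεe] at hval
        simp only [cond] at hval
        have : cind (D \ B) e = 0 := by unfold cind; simp [heB]
        rw [this, mul_zero]
        unfold p'; unfold dd
        simp only [hf, hs, if_true, if_false]
        omega
      · -- neither in K : not in B
        have henB : e ∉ B := fun he => by
          rcases Bside e he with ⟨q, _⟩ | ⟨_, q⟩
          · exact hf q
          · exact hs q
        have : G.dd p' e = G.dd p e := by unfold p'; unfold dd; simp [hf, hs]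
        rw [this, h e]
        congr 1
        unfold cind
        by_cases heD : e ∈ D <;> simp [heD, henB]
    -- apply induction hypothesis
    have hcard : (D \ B).ncard ≤ n := by
      have hlt : (D \ B).ncard < D.ncard := by
        apply Set.ncard_lt_ncard _ (Set.toFinite D)
        constructor
        · exact Set.diff_subset
        · intro hDsub
          exact (hDsub he₀ |>.2) he₀B
      omega
    obtain ⟨m, Bs, hbs, hdis, hun⟩ := ih (D \ B) p' hcard h'
    refine ⟨m + 1, Fin.cons B Bs, ?_, ?_, ?_⟩
    · intro i
      refine Fin.cases ?_ ?_ i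
      · simpa using hbond
      · intro j; simpa using hbs j
    · have hdisB : ∀ j, Disjoint B (Bs j) := by
        intro j
        rw [Set.disjoint_left]
        intro a haB haBs
        have : a ∈ D \ B := hun ▸ Set.mem_iUnion.mpr ⟨j, haBs⟩
        exact this.2 haB
      intro i j hij
      rcases Fin.eq_zero_or_eq_succ i with rfl | ⟨i', rfl⟩ <;>
        rcases Fin.eq_zero_or_eq_succ j with rfl | ⟨j', rfl⟩
      · exact absurd rfl hij
      · simpa using hdisB j'
      · simpa using (hdisB i').symm
      · simp only [Fin.cons_succ]
        exact hdis fun hh => hij (by rw [hh])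
    · have hDeq : D = B ∪ (D \ B) := (Set.union_diff_cancel BD).symm
      rw [hDeq, hun]
      ext x
      simp only [Set.mem_union, Set.mem_iUnion]
      constructor
      · rintro (hx | ⟨i, hi⟩)
        · exact ⟨0, by simpa using hx⟩
        · exact ⟨i.succ, by simpa using hi⟩
      · rintro ⟨i, hi⟩
        rcases Fin.eq_zero_or_eq_succ i with rfl | ⟨j, rfl⟩
        · left; simpa using hi
        · right; exact ⟨j, by simpa using hi⟩

lemma dd_add (G : LabelledGraph V E) (p q : V → ℤ) (e : E) :
    G.dd (fun v => p v + q v) e = G.dd p e + G.dd q e := by unfold dd; ring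

lemma dd_neg (G : LabelledGraph V E) (p : V → ℤ) (e : E) :
    G.dd (fun v => -(p v)) e = - G.dd p e := by unfold dd; ring

lemma bnd_add (G : LabelledGraph V E) [Fintype E] (x y : E → ℤ) (v : V) :
    G.bnd (fun e => x e + y e) v = G.bnd x v + G.bnd y v := by
  unfold bnd
  rw [← Finset.sum_add_distrib]
  exact Finset.sum_congr rfl fun e _ => by ring

lemma bnd_neg (G : LabelledGraph V E) [Fintype E] (x : E → ℤ) (v : V) :
    G.bnd (fun e => -(x e)) v = - G.bnd x v := by
  unfold bnd
  rw [← Finset.sum_neg_distrib]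
  exact Finset.sum_congr rfl fun e _ => by ring

lemma bnd_zero (G : LabelledGraph V E) [Fintype E] (v : V) :
    G.bnd (fun _ => (0:ℤ)) v = 0 :=
  Finset.sum_eq_zero fun e _ => by ring

lemma gg_eq_zero {ε₁ ε₂ : E → Bool} {e : E} (h : ε₁ e = ε₂ e) : gg ε₁ ε₂ e = 0 := by
  unfold gg; rw [if_pos h]

lemma gg_eq_sg {ε₁ ε₂ : E → Bool} {e : E} (h : ε₁ e ≠ ε₂ e) : gg ε₁ ε₂ e = sg ε₁ e := by
  unfold gg; rw [if_neg h]

lemma gg_ne_zero {ε₁ ε₂ : E → Bool} {e : E} (h : gg ε₁ ε₂ e ≠ 0) :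
    ε₁ e ≠ ε₂ e ∧ gg ε₁ ε₂ e = sg ε₁ e := by
  by_cases h' : ε₁ e = ε₂ e
  · exact absurd (gg_eq_zero h') h
  · exact ⟨h', gg_eq_sg h'⟩

lemma gg_rev (ε₁ ε₂ : E → Bool) (e : E) : gg ε₂ ε₁ e = - gg ε₁ ε₂ e := by
  cases h1 : ε₁ e <;> cases h2 : ε₂ e <;> simp_all [gg, sg]

lemma sg_val (ε : E → Bool) (e : E) : sg ε e = 1 ∨ sg ε e = -1 := by
  unfold sg; cases ε e <;> simp

lemma good_of_eulCutEquiv (G : LabelledGraph V E) [Fintype E] {ε₁ ε₂ : E → Bool}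
    (h : G.EulCutEquiv ε₁ ε₂) : G.good ε₁ ε₂ := by
  rcases h with ⟨D₁, D₂, hdisj, hun, hE, hC⟩ | ⟨D₁, D₂, hdisj, hun, hE, hC⟩
  · obtain ⟨p, hp⟩ := G.cut_to_potential ε₁ D₂ hC
    refine ⟨p, fun e => ?_, fun v => ?_⟩
    · by_cases he : e ∈ D₂
      · right
        have hne : ε₁ e ≠ ε₂ e := by
          have : e ∈ diffSet ε₁ ε₂ := by rw [hun]; exact Set.mem_union_right D₁ he
          exact this
        rw [hp e, gg_eq_sg hne]
        unfold cind
        rw [if_pos he, mul_one]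
      · left; rw [hp e]; unfold cind; rw [if_neg he, mul_zero]
    · rw [bnd_congr G (y := fun e => sg ε₁ e * cind D₁ e) ?_ v]
      · exact (G.eulerian_iff ε₁ D₁).mp hE v
      intro e
      beta_reduce
      rw [hp e]
      by_cases he : e ∈ D₂
      · have hne : ε₁ e ≠ ε₂ e := by
          have : e ∈ diffSet ε₁ ε₂ := by rw [hun]; exact Set.mem_union_right D₁ he
          exact this
        have hnd1 : e ∉ D₁ := fun h1 => Set.disjoint_left.mp hdisj h1 he
        rw [gg_eq_sg hne]
        unfold cind
        rw [if_pos he, if_neg hnd1]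
        ring
      · unfold cind
        rw [if_neg he, mul_zero, sub_zero]
        by_cases hd : e ∈ D₁
        · have hne : ε₁ e ≠ ε₂ e := by
            have : e ∈ diffSet ε₁ ε₂ := by rw [hun]; exact Set.mem_union_left D₂ hd
            exact this
          rw [gg_eq_sg hne, if_pos hd, mul_one]
        · have hne : ε₁ e = ε₂ e := by
            by_contra hne
            have hmem : e ∈ D₁ ∪ D₂ := by rw [← hun]; exact hne
            rcases hmem with h1 | h2
            exacts [hd h1, he h2]
          rw [gg_eq_zero hne, if_neg hd, mul_zero]
  · obtain ⟨q, hq⟩ := G.cut_to_potential ε₂ D₂ hC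
    refine ⟨fun v => -(q v), fun e => ?_, fun v => ?_⟩
    · by_cases he : e ∈ D₂
      · right
        have hne : ε₁ e ≠ ε₂ e := by
          have : e ∈ diffSet ε₁ ε₂ := by rw [hun]; exact Set.mem_union_right D₁ he
          exact this
        rw [G.dd_neg q e, hq e, gg_eq_sg hne]
        unfold cind
        rw [if_pos he, mul_one, sg_flip hne]
        ring
      · left; rw [G.dd_neg q e, hq e]; unfold cind; rw [if_neg he, mul_zero, neg_zero]
    · rw [bnd_congr G (y := fun e => -(sg ε₂ e * cind D₁ e)) ?_ v]
      · rw [bnd_neg, (G.eulerian_iff ε₂ D₁).mp hE v, neg_zero]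
      intro e
      beta_reduce
      rw [G.dd_neg q e, hq e]
      by_cases he : e ∈ D₂
      · have hne : ε₁ e ≠ ε₂ e := by
          have : e ∈ diffSet ε₁ ε₂ := by rw [hun]; exact Set.mem_union_right D₁ he
          exact this
        have hnd1 : e ∉ D₁ := fun h1 => Set.disjoint_left.mp hdisj h1 he
        rw [gg_eq_sg hne]
        unfold cind
        rw [if_pos he, if_neg hnd1, sg_flip hne]
        ring
      · unfold cind
        rw [if_neg he, mul_zero, neg_zero, sub_zero]
        by_cases hd : e ∈ D₁
        · have hne : ε₁ e ≠ ε₂ e := by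
            have : e ∈ diffSet ε₁ ε₂ := by rw [hun]; exact Set.mem_union_left D₂ hd
            exact this
          rw [gg_eq_sg hne, if_pos hd, mul_one, sg_flip hne]
          ring
        · have hne : ε₁ e = ε₂ e := by
            by_contra hne
            have hmem : e ∈ D₁ ∪ D₂ := by rw [← hun]; exact hne
            rcases hmem with h1 | h2
            exacts [hd h1, he h2]
          rw [gg_eq_zero hne, if_neg hd, mul_zero, neg_zero]

lemma eulCutEquiv_of_good (G : LabelledGraph V E) [Fintype E] {ε₁ ε₂ : E → Bool}
    (h : G.good ε₁ ε₂) : G.EulCutEquiv ε₁ ε₂ := by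
  obtain ⟨p, hp, hpB⟩ := h
  set D₂ : Set E := {e | G.dd p e ≠ 0} with hD₂
  set D₁ : Set E := diffSet ε₁ ε₂ \ D₂ with hD₁
  have hsub : D₂ ⊆ diffSet ε₁ ε₂ := by
    intro e he
    have hgg : gg ε₁ ε₂ e ≠ 0 := by
      rcases hp e with h0 | hg
      · exact absurd h0 he
      · rw [← hg]; exact he
    exact (gg_ne_zero hgg).1
  left
  refine ⟨D₁, D₂, ?_, (Set.diff_union_of_subset hsub).symm, ?_, ?_⟩
  · exact Set.disjoint_left.mpr fun e he => he.2
  · rw [G.eulerian_iff ε₁ D₁]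
    intro v
    rw [bnd_congr G (y := fun e => gg ε₁ ε₂ e - G.dd p e) ?_ v]
    · exact hpB v
    intro e
    beta_reduce
    by_cases he : G.dd p e = 0
    · rw [he, sub_zero]
      by_cases hd : ε₁ e = ε₂ e
      · have : e ∉ D₁ := fun h1 => h1.1 hd
        rw [gg_eq_zero hd]
        unfold cind
        rw [if_neg this, mul_zero]
      · have : e ∈ D₁ := ⟨hd, fun hcon => hcon he⟩
        rw [gg_eq_sg hd]
        unfold cind
        rw [if_pos this, mul_one]
    · have hg : G.dd p e = gg ε₁ ε₂ e := (hp e).resolve_left he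
      have : e ∉ D₁ := fun h1 => h1.2 he
      unfold cind
      rw [if_neg this, mul_zero, hg, sub_self]
  · apply G.potential_to_cut ε₁ D₂ p
    intro e
    by_cases he : G.dd p e = 0
    · have : e ∉ D₂ := fun h2 => h2 he
      unfold cind
      rw [if_neg this, mul_zero, he]
    · have hg : G.dd p e = gg ε₁ ε₂ e := (hp e).resolve_left he
      have hgg : gg ε₁ ε₂ e ≠ 0 := hg ▸ he
      have hmem : e ∈ D₂ := he
      unfold cind
      rw [if_pos hmem, mul_one, hg, (gg_ne_zero hgg).2]

lemma good_bad (G : LabelledGraph V E) [Fintype V] [Fintype E] {ε₁ ε₂ ε₃ : E → Bool}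
    {p q : V → ℤ} (hp : ∀ e, G.dd p e = 0 ∨ G.dd p e = gg ε₁ ε₂ e)
    (hq : ∀ e, G.dd q e = 0 ∨ G.dd q e = gg ε₂ ε₃ e)
    (hqB : ∀ v, G.bnd (fun e => gg ε₂ ε₃ e - G.dd q e) v = 0)
    {e₀ : E} (hp0 : G.dd p e₀ = gg ε₁ ε₂ e₀) (h12 : gg ε₁ ε₂ e₀ ≠ 0)
    (hq0 : G.dd q e₀ = 0) (h23 : gg ε₂ ε₃ e₀ ≠ 0) : False := by
  classical
  set k : ℤ := max (p (G.fst e₀)) (p (G.snd e₀)) with hk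
  set S : Set V := {v | k ≤ p v} with hSdef
  have chiS : ∀ v, chi S v = if k ≤ p v then 1 else 0 := fun v => by
    simp only [chi, hSdef, Set.mem_setOf_eq]
  -- the general sign fact for crossing edges
  have hsign : ∀ e, chi S (G.snd e) ≠ chi S (G.fst e) →
      G.dd p e = sg ε₁ e ∧ ε₁ e ≠ ε₂ e ∧
        chi S (G.snd e) - chi S (G.fst e) = - sg ε₁ e := by
    intro e hch
    have hne0 : G.dd p e ≠ 0 := by
      intro h0
      apply hch
      rw [chiS, chiS]
      unfold dd at h0
      have : p (G.fst e) = p (G.snd e) := by omega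
      rw [this]
    have hg : G.dd p e = gg ε₁ ε₂ e := (hp e).resolve_left hne0
    have hgg : gg ε₁ ε₂ e ≠ 0 := hg ▸ hne0
    obtain ⟨hne, hsg⟩ := gg_ne_zero hgg
    have hdd : G.dd p e = sg ε₁ e := by rw [hg, hsg]
    refine ⟨hdd, hne, ?_⟩
    have hval : p (G.fst e) - p (G.snd e) = sg ε₁ e := hdd
    rcases sg_val ε₁ e with h1 | h1 <;> rw [h1] at hval ⊢ <;>
      rw [chiS, chiS] at hch ⊢ <;>
      by_cases c1 : k ≤ p (G.fst e) <;> by_cases c2 : k ≤ p (G.snd e) <;>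
      simp [c1, c2] at hch ⊢ <;> omega
  have hflux := G.flux hqB S
  have hnonneg : ∀ e ∈ Finset.univ,
      0 ≤ (gg ε₂ ε₃ e - G.dd q e) * (chi S (G.snd e) - chi S (G.fst e)) := by
    intro e _
    by_cases hch : chi S (G.snd e) = chi S (G.fst e)
    · rw [hch, sub_self, mul_zero]
    obtain ⟨hdd, hne, hchv⟩ := hsign e hch
    rw [hchv]
    rcases hq e with h0 | hgq
    · rw [h0, sub_zero]
      by_cases h23e : gg ε₂ ε₃ e = 0
      · rw [h23e]; simp
      · obtain ⟨hne23, hsg23⟩ := gg_ne_zero h23e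
        rw [hsg23, sg_flip hne]
        rcases sg_val ε₁ e with h1 | h1 <;> rw [h1] <;> norm_num
    · rw [hgq, sub_self, zero_mul]
  have hall := (Finset.sum_eq_zero_iff_of_nonneg hnonneg).mp hflux
  have hterm := hall e₀ (Finset.mem_univ e₀)
  -- evaluate at e₀
  have hch0 : chi S (G.snd e₀) ≠ chi S (G.fst e₀) := by
    obtain ⟨hne, hsg⟩ := gg_ne_zero h12
    have hval : p (G.fst e₀) - p (G.snd e₀) = sg ε₁ e₀ := by
      have := hp0
      rw [hsg] at this
      exact this
    rw [chiS, chiS]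
    have hk1 : p (G.fst e₀) ≤ k := le_max_left _ _
    have hk2 : p (G.snd e₀) ≤ k := le_max_right _ _
    have hk3 : k ≤ p (G.fst e₀) ∨ k ≤ p (G.snd e₀) := by
      rcases max_choice (p (G.fst e₀)) (p (G.snd e₀)) with h | h <;> rw [hk, h] <;> simp
    rcases sg_val ε₁ e₀ with h1 | h1 <;> rw [h1] at hval <;>
      by_cases c1 : k ≤ p (G.fst e₀) <;> by_cases c2 : k ≤ p (G.snd e₀) <;>
      simp [c1, c2] <;> omega
  obtain ⟨hdd0, hne0, hchv0⟩ := hsign e₀ hch0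
  rw [hchv0, hq0, sub_zero, (gg_ne_zero h23).2, sg_flip hne0] at hterm
  rcases sg_val ε₁ e₀ with h1 | h1 <;> rw [h1] at hterm <;> norm_num at hterm

lemma good_trans (G : LabelledGraph V E) [Fintype V] [Fintype E] {ε₁ ε₂ ε₃ : E → Bool}
    (h12 : G.good ε₁ ε₂) (h23 : G.good ε₂ ε₃) : G.good ε₁ ε₃ := by
  obtain ⟨p, hp, hpB⟩ := h12
  obtain ⟨q, hq, hqB⟩ := h23
  refine ⟨fun v => p v + q v, fun e => ?_, fun v => ?_⟩
  · rw [G.dd_add p q e, gg_add ε₁ ε₂ ε₃ e]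
    rcases hp e with hp0 | hpg <;> rcases hq e with hq0 | hqg
    · left; rw [hp0, hq0]; ring
    · by_cases h23z : gg ε₂ ε₃ e = 0
      · left; rw [hp0, hqg, h23z]; ring
      by_cases h12z : gg ε₁ ε₂ e = 0
      · right; rw [hp0, hqg, h12z]
      exfalso
      -- reversed bad case: use good_bad on (ε₃, ε₂, ε₁) with potentials -q, -p
      refine G.good_bad (ε₁ := ε₃) (ε₂ := ε₂) (ε₃ := ε₁)
        (p := fun v => -(q v)) (q := fun v => -(p v)) ?_ ?_ ?_
        (e₀ := e) ?_ ?_ ?_ ?_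
      · intro f
        rw [G.dd_neg q f, gg_rev ε₂ ε₃ f]
        rcases hq f with h0 | hg
        · left; rw [h0, neg_zero]
        · right; rw [hg]
      · intro f
        rw [G.dd_neg p f, gg_rev ε₁ ε₂ f]
        rcases hp f with h0 | hg
        · left; rw [h0, neg_zero]
        · right; rw [hg]
      · intro v
        rw [bnd_congr G (y := fun f => -(gg ε₁ ε₂ f - G.dd p f)) ?_ v]
        · rw [bnd_neg, hpB v, neg_zero]
        intro f
        beta_reduce
        rw [G.dd_neg p f, gg_rev ε₁ ε₂ f]
        ring
      · rw [G.dd_neg q e, gg_rev ε₂ ε₃ e, hqg]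
      · rw [gg_rev ε₂ ε₃ e]; exact neg_ne_zero.mpr h23z
      · rw [G.dd_neg p e, hp0, neg_zero]
      · rw [gg_rev ε₁ ε₂ e]; exact neg_ne_zero.mpr h12z
    · by_cases h12z : gg ε₁ ε₂ e = 0
      · left; rw [hpg, hq0, h12z]; ring
      by_cases h23z : gg ε₂ ε₃ e = 0
      · right; rw [hpg, hq0, h23z]
      exfalso
      exact G.good_bad hp hq hqB hpg h12z hq0 h23z
    · by_cases h12z : gg ε₁ ε₂ e = 0
      · by_cases h23z : gg ε₂ ε₃ e = 0
        · left; rw [hpg, hqg, h12z, h23z]; ring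
        · right; rw [hpg, hqg, h12z]
      · by_cases h23z : gg ε₂ ε₃ e = 0
        · right; rw [hpg, hqg, h23z]
        · left
          obtain ⟨hne12, hsg12⟩ := gg_ne_zero h12z
          obtain ⟨hne23, hsg23⟩ := gg_ne_zero h23z
          rw [hpg, hqg, hsg12, hsg23, sg_flip hne12]
          ring
  · rw [bnd_congr G
      (y := fun e => (gg ε₁ ε₂ e - G.dd p e) + (gg ε₂ ε₃ e - G.dd q e)) ?_ v]
    · rw [bnd_add, hpB v, hqB v]; ring
    intro e
    beta_reduce
    rw [G.dd_add p q e, gg_add ε₁ ε₂ ε₃ e]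
    ring

lemma good_refl (G : LabelledGraph V E) [Fintype E] (ε : E → Bool) : G.good ε ε := by
  refine ⟨fun _ => 0, fun e => Or.inl (by unfold dd; ring), fun v => ?_⟩
  rw [bnd_congr G (y := fun _ => (0:ℤ)) ?_ v]
  · exact G.bnd_zero v
  intro e
  beta_reduce
  rw [gg_eq_zero rfl]
  unfold dd
  ring

end LabelledGraph

/-- Eulerian-cut equivalence is an equivalence relation on the set of
all orientations of `G`. -/
theorem stmt19 {V E : Type} [Fintype V] [Fintype E] (G : LabelledGraph V E) :
    Equivalence (G.EulCutEquiv) := by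
  constructor
  · intro ε
    exact G.eulCutEquiv_of_good (G.good_refl ε)
  · intro ε₁ ε₂ h
    have hdiff : LabelledGraph.diffSet ε₂ ε₁ = LabelledGraph.diffSet ε₁ ε₂ := by
      ext e
      exact ne_comm
    rcases h with ⟨D₁, D₂, a, b, c, d⟩ | ⟨D₁, D₂, a, b, c, d⟩
    · exact Or.inr ⟨D₁, D₂, a, by rw [hdiff]; exact b, c, d⟩
    · exact Or.inl ⟨D₁, D₂, a, by rw [hdiff]; exact b, c, d⟩
  · intro ε₁ ε₂ ε₃ h12 h23
    exact G.eulCutEquiv_of_good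
      (G.good_trans (G.good_of_eulCutEquiv h12) (G.good_of_eulCutEquiv h23))
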